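/- Let α > 0 and r ≥ 1, and consider the scalar recursion x^{k+1} = x^k + (α/r)·sign(z - x^k) for a constant target z ∈ ℝ, where sign(0) = 0. Then for all k ≥ ⌈|z - x^0|·r/α⌉, we have |x^k - z| ≤ α/r. -/

import Mathlib

/-!
Each step moves `x` by exactly `c = α / r` towards `z` (or not at all once `x = z`), so the
distance to `z` drops by `c` per step while it exceeds `c`, and once it is at most `c` it stays
so: overshooting `z` by one step lands within `c` on the other side. Hence after `k` steps the
distance is at most `max c (|z - x 0| - k c)`, which is `c` as soon as `k c ≥ |z - x 0|`.
-/

lemma abs_sub_mul_sign_le_max {c : ℝ} (hc : 0 ≤ c) (d : ℝ) :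
    |d - c * Real.sign d| ≤ max c (|d| - c) := by
  have hleft := le_max_left c (|d| - c)
  have hright := le_max_right c (|d| - c)
  rw [abs_le]
  rcases lt_trichotomy d 0 with hd | rfl | hd
  · rw [Real.sign_of_neg hd, abs_of_neg hd] at *
    constructor <;> linarith
  · rw [Real.sign_zero]
    constructor <;> linarith
  · rw [Real.sign_of_pos hd, abs_of_pos hd] at *
    constructor <;> linarith

section SignStep

variable {c z : ℝ} {x : ℕ → ℝ}

lemma abs_sub_le_max_of_sign_step (hc : 0 ≤ c)
    (hx : ∀ k, x (k + 1) = x k + c * Real.sign (z - x k)) (k : ℕ) :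
    |z - x k| ≤ max c (|z - x 0| - k * c) := by
  induction k with
  | zero => simp
  | succ n ih =>
    calc |z - x (n + 1)| = |(z - x n) - c * Real.sign (z - x n)| := by rw [hx n]; ring_nf
      _ ≤ max c (|z - x n| - c) := abs_sub_mul_sign_le_max hc _
      _ ≤ max c (max c (|z - x 0| - n * c) - c) := by gcongr
      _ = max c (|z - x 0| - (n + 1 : ℕ) * c) := by
        rw [← max_sub_sub_right, sub_self, ← max_assoc, max_eq_left hc]
        push_cast
        ring_nf

lemma abs_sub_le_of_sign_step (hc : 0 ≤ c)
    (hx : ∀ k, x (k + 1) = x k + c * Real.sign (z - x k)) {k : ℕ}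
    (hk : |z - x 0| ≤ k * c) : |x k - z| ≤ c := by
  rw [abs_sub_comm]
  exact (abs_sub_le_max_of_sign_step hc hx k).trans (max_le le_rfl (by linarith))

end SignStep

/-- The sign-tracking recursion `x^{k+1} = x^k + (α/r)·sign(z - x^k)` reaches
and stays in an `α/r`-neighborhood of `z` after `⌈|z - x⁰|·r/α⌉` steps. -/
theorem stmt_12 (α r z : ℝ) (hα : 0 < α) (hr : 1 ≤ r) (x : ℕ → ℝ)
    (hx : ∀ k, x (k + 1) = x k + (α / r) * Real.sign (z - x k)) :
    ∀ k, ⌈|z - x 0| * r / α⌉₊ ≤ k → |x k - z| ≤ α / r := by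
  intro k hk
  have hr₀ : 0 < r := zero_lt_one.trans_le hr
  have hstep : 0 < α / r := div_pos hα hr₀
  refine abs_sub_le_of_sign_step hstep.le hx ?_
  calc |z - x 0| = |z - x 0| * r / α * (α / r) := by field_simp
    _ ≤ ⌈|z - x 0| * r / α⌉₊ * (α / r) := by gcongr; exact Nat.le_ceil _
    _ ≤ k * (α / r) := by gcongr
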